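/- arXiv:2309.03163 — 3 statements merged into one kernel-verified Lean document; each statement's English description precedes it below -/
import Mathlib

section
/- (Two adjacent blocks in the large blocks scenario behave as if independent.) Let X = (X_j)_{j∈ℤ} be a stationary ℝ^d-valued sequence that is m-dependent for some m ∈ ℕ. Let (u_n) be thresholds with u_n → ∞, w_n = P(‖X_0‖ > u_n) > 0, and (r_n) positive integers with r_n → ∞, r_n w_n → 0 and r_n^2 w_n → ∞. Let A_1 = {max_{1 ≤ i ≤ r_n} ‖X_i‖ > u_n} and A_2 = {max_{r_n+1 ≤ i ≤ 2r_n} ‖X_i‖ > u_n}. Then limsup_{n→∞} P(A_1 ∩ A_2)/(r_n^2 w_n^2) < ∞. -/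
/-!
Split the second block into its first `m` indices and the rest. The rest is at distance more
than `m` from the first block, so by `m`-dependence the two exceedance events are independent,
and each has probability at most `r w` by the union bound and stationarity. Hence
`P(A₁ ∩ A₂) ≤ (r w)² + m w`, and `m w / (r² w²) = m / (r² w) → 0`.
-/

open MeasureTheory Filter ProbabilityTheory Finset
open scoped ENNReal

section

variable {Ω E : Type*} [MeasurableSpace E]

theorem biUnion_Icc_subset_union {α : Type*} (f : ℤ → Set α) (a c b : ℤ) :
    ⋃ i ∈ Icc a b, f i ⊆ (⋃ i ∈ Icc a c, f i) ∪ ⋃ i ∈ Icc (c + 1) b, f i := by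
  simp only [Set.subset_def, Set.mem_union, Set.mem_iUnion, mem_Icc, exists_prop]
  rintro x ⟨i, ⟨hai, hib⟩, hx⟩
  by_cases hic : i ≤ c
  · exact Or.inl ⟨i, ⟨hai, hic⟩, hx⟩
  · exact Or.inr ⟨i, ⟨by omega, hib⟩, hx⟩

theorem measurableSet_iSup_comap_biUnion (X : ℤ → Ω → E) {p : ℤ → Prop} {I : Finset ℤ}
    (hI : ∀ i ∈ I, p i) {s : Set E} (hs : MeasurableSet s) :
    MeasurableSet[⨆ j, ⨆ (_ : p j), MeasurableSpace.comap (X j) inferInstance]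
      (⋃ i ∈ I, X i ⁻¹' s) :=
  .biUnion I.countable_toSet fun i hi =>
    le_iSup₂ (f := fun j (_ : p j) => MeasurableSpace.comap (X j) inferInstance) i (hI i hi) _
      ⟨s, hs, rfl⟩

variable [MeasurableSpace Ω]

def IsStationaryProcess (P : Measure Ω) (X : ℤ → Ω → E) : Prop :=
  ∀ k : ℤ,
    Measure.map (fun ω (j : ℤ) => X (j + k) ω) P = Measure.map (fun ω (j : ℤ) => X j ω) P

def IsMDependent (P : Measure Ω) (X : ℤ → Ω → E) (m : ℕ) : Prop :=
  ∀ k : ℤ, Indep (⨆ j ≤ k, MeasurableSpace.comap (X j) inferInstance)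
    (⨆ j ≥ k + (m : ℤ) + 1, MeasurableSpace.comap (X j) inferInstance) P

variable {P : Measure Ω} {X : ℤ → Ω → E}

theorem IsStationaryProcess.measure_preimage (hX : IsStationaryProcess P X)
    (hmeas : ∀ j, Measurable (X j)) {s : Set E} (hs : MeasurableSet s) (i : ℤ) :
    P (X i ⁻¹' s) = P (X 0 ⁻¹' s) := by
  have heval : MeasurableSet ((fun x : ℤ → E => x 0) ⁻¹' s) := measurable_pi_apply 0 hs
  have h := congrArg (· ((fun x : ℤ → E => x 0) ⁻¹' s)) (hX i)
  rw [Measure.map_apply (measurable_pi_lambda _ fun j => hmeas (j + i)) heval,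
    Measure.map_apply (measurable_pi_lambda _ hmeas) heval] at h
  simpa [Set.preimage_preimage] using h

theorem IsStationaryProcess.measure_biUnion_Icc_le (hX : IsStationaryProcess P X)
    (hmeas : ∀ j, Measurable (X j)) {s : Set E} (hs : MeasurableSet s) (a b : ℤ) :
    P (⋃ i ∈ Icc a b, X i ⁻¹' s) ≤ (b + 1 - a).toNat * P (X 0 ⁻¹' s) :=
  calc P (⋃ i ∈ Icc a b, X i ⁻¹' s) ≤ ∑ i ∈ Icc a b, P (X i ⁻¹' s) :=
        measure_biUnion_finset_le _ _
    _ = (b + 1 - a).toNat * P (X 0 ⁻¹' s) := by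
        simp [hX.measure_preimage hmeas hs, Int.card_Icc]

theorem IsMDependent.measure_biUnion_inter_biUnion {m : ℕ} (hX : IsMDependent P X m)
    {s t : Set E} (hs : MeasurableSet s) (ht : MeasurableSet t) (a k b : ℤ) :
    P ((⋃ i ∈ Icc a k, X i ⁻¹' s) ∩ ⋃ i ∈ Icc (k + m + 1) b, X i ⁻¹' t) =
      P (⋃ i ∈ Icc a k, X i ⁻¹' s) * P (⋃ i ∈ Icc (k + m + 1) b, X i ⁻¹' t) :=
  (Indep_iff _ _ P).mp (hX k) _ _
    (measurableSet_iSup_comap_biUnion X (fun _ hi => (mem_Icc.mp hi).2) hs)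
    (measurableSet_iSup_comap_biUnion X (fun _ hi => (mem_Icc.mp hi).1) ht)

theorem measure_adjacent_blocks_le {m : ℕ} (hstat : IsStationaryProcess P X)
    (hdep : IsMDependent P X m) (hmeas : ∀ j, Measurable (X j)) {s : Set E}
    (hs : MeasurableSet s) (r : ℕ) :
    P ((⋃ i ∈ Icc 1 (r : ℤ), X i ⁻¹' s) ∩ ⋃ i ∈ Icc ((r : ℤ) + 1) (2 * r), X i ⁻¹' s) ≤
      (r * P (X 0 ⁻¹' s)) ^ 2 + m * P (X 0 ⁻¹' s) := by
  set A₁ := ⋃ i ∈ Icc 1 (r : ℤ), X i ⁻¹' s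
  set A_near := ⋃ i ∈ Icc ((r : ℤ) + 1) (r + m), X i ⁻¹' s
  set A_far := ⋃ i ∈ Icc ((r : ℤ) + m + 1) (2 * r), X i ⁻¹' s
  have hsplit : A₁ ∩ ⋃ i ∈ Icc ((r : ℤ) + 1) (2 * r), X i ⁻¹' s ⊆ (A₁ ∩ A_far) ∪ A_near := by
    rintro ω ⟨h₁, h₂⟩
    rcases biUnion_Icc_subset_union _ _ ((r : ℤ) + m) _ h₂ with h | h
    · exact Or.inr h
    · exact Or.inl ⟨h₁, h⟩
  have hcard (a b : ℤ) (c : ℕ) (h : b + 1 - a ≤ c) :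
      P (⋃ i ∈ Icc a b, X i ⁻¹' s) ≤ c * P (X 0 ⁻¹' s) :=
    (hstat.measure_biUnion_Icc_le hmeas hs a b).trans <| by gcongr; omega
  calc _ ≤ P (A₁ ∩ A_far) + P A_near := (measure_mono hsplit).trans (measure_union_le _ _)
    _ = P A₁ * P A_far + P A_near := by
        rw [hdep.measure_biUnion_inter_biUnion hs hs]
    _ ≤ (r * P (X 0 ⁻¹' s)) * (r * P (X 0 ⁻¹' s)) + m * P (X 0 ⁻¹' s) := by
        gcongr <;> apply hcard <;> omega
    _ = _ := by rw [sq]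

theorem measure_adjacent_blocks_toReal_le [IsFiniteMeasure P] {m : ℕ}
    (hstat : IsStationaryProcess P X) (hdep : IsMDependent P X m)
    (hmeas : ∀ j, Measurable (X j)) {s : Set E} (hs : MeasurableSet s) (r : ℕ) :
    (P ({ω | ∃ i : ℤ, 1 ≤ i ∧ i ≤ r ∧ X i ω ∈ s} ∩
        {ω | ∃ i : ℤ, r + 1 ≤ i ∧ i ≤ 2 * (r : ℤ) ∧ X i ω ∈ s})).toReal ≤
      (r * (P (X 0 ⁻¹' s)).toReal) ^ 2 + m * (P (X 0 ⁻¹' s)).toReal := by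
  have hblock (a b : ℤ) :
      {ω | ∃ i : ℤ, a ≤ i ∧ i ≤ b ∧ X i ω ∈ s} = ⋃ i ∈ Icc a b, X i ⁻¹' s := by
    ext; simp [and_assoc]
  have hfin := measure_ne_top P (X 0 ⁻¹' s)
  rw [hblock, hblock]
  refine (ENNReal.toReal_mono (by finiteness)
    (measure_adjacent_blocks_le hstat hdep hmeas hs r)).trans_eq ?_
  simp [ENNReal.toReal_add, ENNReal.toReal_mul, ENNReal.toReal_pow, ENNReal.mul_ne_top, hfin]

end

theorem div_le_two_of_le_sq_add {x ρ w m : ℝ} (hx : x ≤ (ρ * w) ^ 2 + m * w)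
    (hm : m ≤ ρ ^ 2 * w) (hpos : 0 < ρ ^ 2 * w) : x / (ρ ^ 2 * w ^ 2) ≤ 2 := by
  have hw : 0 < w := pos_of_mul_pos_right hpos (sq_nonneg ρ)
  rw [div_le_iff₀ (by nlinarith)]
  calc x ≤ (ρ * w) ^ 2 + m * w := hx
    _ ≤ (ρ * w) ^ 2 + ρ ^ 2 * w * w := by gcongr
    _ = 2 * (ρ ^ 2 * w ^ 2) := by ring

theorem stmt_14_general
    {Ω : Type*} [MeasurableSpace Ω] (P : Measure Ω) [IsProbabilityMeasure P]
    (d : ℕ) (X : ℤ → Ω → (Fin d → ℝ)) (hmeas : ∀ j, Measurable (X j))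
    (hstat : ∀ k : ℤ,
      Measure.map (fun ω (j : ℤ) => X (j + k) ω) P
        = Measure.map (fun ω (j : ℤ) => X j ω) P)
    (m : ℕ)
    (hmdep : ∀ k : ℤ,
      Indep (⨆ j ≤ k, MeasurableSpace.comap (X j) inferInstance)
            (⨆ j ≥ k + (m : ℤ) + 1, MeasurableSpace.comap (X j) inferInstance) P)
    (u : ℕ → ℝ)
    (w : ℕ → ℝ) (hw : ∀ n, w n = (P {ω | ‖X 0 ω‖ > u n}).toReal)
    (r : ℕ → ℕ)
    (hlarge : Tendsto (fun n => (r n : ℝ) ^ 2 * w n) atTop atTop) :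
    Filter.IsBoundedUnder (· ≤ ·) atTop (fun n =>
      (P ({ω | ∃ i : ℤ, 1 ≤ i ∧ i ≤ (r n : ℤ) ∧ ‖X i ω‖ > u n} ∩
          {ω | ∃ i : ℤ, (r n : ℤ) + 1 ≤ i ∧ i ≤ 2 * (r n : ℤ) ∧ ‖X i ω‖ > u n})).toReal
        / ((r n : ℝ) ^ 2 * w n ^ 2)) := by
  refine isBoundedUnder_of_eventually_le (a := 2) ?_
  filter_upwards [hlarge.eventually_ge_atTop (max (m : ℝ) 1)] with n hn
  have hs : MeasurableSet {v : Fin d → ℝ | ‖v‖ > u n} :=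
    measurableSet_lt measurable_const measurable_norm
  have hblocks := measure_adjacent_blocks_toReal_le hstat hmdep hmeas hs (r n)
  rw [Set.preimage_ofPred_eq, ← hw n] at hblocks
  exact div_le_two_of_le_sq_add hblocks (le_of_max_le_left hn)
    (one_pos.trans_le (le_of_max_le_right hn))

/-- Two adjacent blocks in the large blocks scenario behave as if
independent: for a stationary m-dependent sequence with `r_n → ∞`, `r_n w_n → 0`,
`r_n² w_n → ∞`, one has `limsup P(A₁ ∩ A₂)/(r_n² w_n²) < ∞`. -/
theorem stmt_14
    {Ω : Type*} [MeasurableSpace Ω] (P : Measure Ω) [IsProbabilityMeasure P]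
    (d : ℕ) (X : ℤ → Ω → (Fin d → ℝ)) (hmeas : ∀ j, Measurable (X j))
    (hstat : ∀ k : ℤ,
      Measure.map (fun ω (j : ℤ) => X (j + k) ω) P
        = Measure.map (fun ω (j : ℤ) => X j ω) P)
    (m : ℕ)
    (hmdep : ∀ k : ℤ,
      Indep (⨆ j ≤ k, MeasurableSpace.comap (X j) inferInstance)
            (⨆ j ≥ k + (m : ℤ) + 1, MeasurableSpace.comap (X j) inferInstance) P)
    (u : ℕ → ℝ) (hu : Tendsto u atTop atTop)
    (w : ℕ → ℝ) (hw : ∀ n, w n = (P {ω | ‖X 0 ω‖ > u n}).toReal)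
    (hwpos : ∀ n, 0 < w n)
    (r : ℕ → ℕ) (hrpos : ∀ n, 0 < r n)
    (hr : Tendsto (fun n => (r n : ℝ)) atTop atTop)
    (hrw : Tendsto (fun n => (r n : ℝ) * w n) atTop (nhds 0))
    (hlarge : Tendsto (fun n => (r n : ℝ) ^ 2 * w n) atTop atTop) :
    Filter.IsBoundedUnder (· ≤ ·) atTop (fun n =>
      (P ({ω | ∃ i : ℤ, 1 ≤ i ∧ i ≤ (r n : ℤ) ∧ ‖X i ω‖ > u n} ∩
          {ω | ∃ i : ℤ, (r n : ℤ) + 1 ≤ i ∧ i ≤ 2 * (r n : ℤ) ∧ ‖X i ω‖ > u n})).toReal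
        / ((r n : ℝ) ^ 2 * w n ^ 2)) :=
  stmt_14_general P d X hmeas hstat m hmdep u w hw r hlarge
end

section
/- (Tail of the cluster length in the large blocks scenario.) Let X = (X_j)_{j∈ℤ} be a stationary ℝ^d-valued sequence that is m-dependent for some m ∈ ℕ. Let (u_n) be thresholds with w_n = P(‖X_0‖ > u_n), and (r_n) positive integers with r_n → ∞. On the event A_1 = {max_{1 ≤ i ≤ r_n} ‖X_i‖ > u_n} let L_1 = (last exceedance index in {1,…,r_n}) − (first exceedance index in {1,…,r_n}) + 1, and L_1 = 0 off A_1. Then for every a > 0, limsup_{n→∞} P(L_1 > a r_n)/(r_n^2 w_n^2) < ∞. -/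
open MeasureTheory Filter ProbabilityTheory
open scoped Classical

/-- Tail of the cluster length in the large blocks scenario:
for a stationary m-dependent sequence, for every `a > 0`,
`limsup P(L₁ > a r_n)/(r_n² w_n²) < ∞`. -/
theorem stmt_15
    {Ω : Type*} [MeasurableSpace Ω] (P : Measure Ω) [IsProbabilityMeasure P]
    (d : ℕ) (X : ℤ → Ω → (Fin d → ℝ)) (hmeas : ∀ j, Measurable (X j))
    (hstat : ∀ k : ℤ,
      Measure.map (fun ω (j : ℤ) => X (j + k) ω) P
        = Measure.map (fun ω (j : ℤ) => X j ω) P)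
    (m : ℕ)
    (hmdep : ∀ k : ℤ,
      Indep (⨆ j ≤ k, MeasurableSpace.comap (X j) inferInstance)
            (⨆ j ≥ k + (m : ℤ) + 1, MeasurableSpace.comap (X j) inferInstance) P)
    (u : ℕ → ℝ) (w : ℕ → ℝ) (hw : ∀ n, w n = (P {ω | ‖X 0 ω‖ > u n}).toReal)
    (r : ℕ → ℕ) (hrpos : ∀ n, 0 < r n)
    (hr : Tendsto (fun n => (r n : ℝ)) atTop atTop)
    (A : ℕ → Set Ω)
    (hA : ∀ n, A n = {ω | ∃ i : ℤ, 1 ≤ i ∧ i ≤ (r n : ℤ) ∧ ‖X i ω‖ > u n})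
    (L : ℕ → Ω → ℤ)
    (hL : ∀ n ω, L n ω =
      if ω ∈ A n then
        sSup {i : ℤ | 1 ≤ i ∧ i ≤ (r n : ℤ) ∧ ‖X i ω‖ > u n}
          - sInf {i : ℤ | 1 ≤ i ∧ i ≤ (r n : ℤ) ∧ ‖X i ω‖ > u n} + 1
      else 0)
    (a : ℝ) (ha : 0 < a) :
    Filter.IsBoundedUnder (· ≤ ·) atTop (fun n =>
      (P {ω | ((L n ω : ℝ)) > a * (r n : ℝ)}).toReal / ((r n : ℝ) ^ 2 * w n ^ 2)) := by
  classical
  -- the exceedance events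
  set E : ℕ → ℤ → Set Ω := fun n i => {ω | ‖X i ω‖ > u n} with hE
  have hEmeasSet : ∀ c : ℝ, MeasurableSet {x : Fin d → ℝ | ‖x‖ > c} := fun c =>
    measurableSet_lt measurable_const measurable_norm
  have hEdef : ∀ n i, E n i = X i ⁻¹' {x : Fin d → ℝ | ‖x‖ > u n} := fun n i => rfl
  -- shift invariance of one-dimensional marginals
  have hmapX : ∀ i : ℤ, Measure.map (X i) P = Measure.map (X 0) P := by
    intro i
    have h1 : Measurable fun ω (j : ℤ) => X (j + i) ω :=
      measurable_pi_lambda _ fun j => hmeas _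
    have h2 : Measurable fun ω (j : ℤ) => X j ω :=
      measurable_pi_lambda _ fun j => hmeas _
    have e1 : X i = (fun x : ℤ → Fin d → ℝ => x 0) ∘ fun ω (j : ℤ) => X (j + i) ω := by
      funext ω; simp
    have e2 : X 0 = (fun x : ℤ → Fin d → ℝ => x 0) ∘ fun ω (j : ℤ) => X j ω := rfl
    rw [e1, e2, ← Measure.map_map (measurable_pi_apply 0) h1,
      ← Measure.map_map (measurable_pi_apply 0) h2, hstat i]
  have hPE : ∀ n (i : ℤ), P (E n i) = P (E n 0) := by
    intro n i
    rw [hEdef, hEdef, ← Measure.map_apply (hmeas i) (hEmeasSet _),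
      ← Measure.map_apply (hmeas 0) (hEmeasSet _), hmapX i]
  -- independence of distant exceedance events
  have hindep : ∀ n (i j : ℤ), i + (m : ℤ) + 1 ≤ j →
      P (E n i ∩ E n j) = P (E n i) * P (E n j) := by
    intro n i j hij
    have h := hmdep i
    have hi : MeasurableSet[⨆ k ≤ i, MeasurableSpace.comap (X k) inferInstance] (E n i) := by
      have hbase : MeasurableSet[MeasurableSpace.comap (X i) inferInstance] (E n i) :=
        ⟨{x : Fin d → ℝ | ‖x‖ > u n}, hEmeasSet _, rfl⟩
      exact (le_iSup₂ (f := fun k (_ : k ≤ i) =>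
        MeasurableSpace.comap (X k) inferInstance) i le_rfl) _ hbase
    have hj : MeasurableSet[⨆ k ≥ i + (m : ℤ) + 1,
        MeasurableSpace.comap (X k) inferInstance] (E n j) := by
      have hbase : MeasurableSet[MeasurableSpace.comap (X j) inferInstance] (E n j) :=
        ⟨{x : Fin d → ℝ | ‖x‖ > u n}, hEmeasSet _, rfl⟩
      exact (le_iSup₂ (f := fun k (_ : k ≥ i + (m : ℤ) + 1) =>
        MeasurableSpace.comap (X k) inferInstance) j hij) _ hbase
    exact (h.indepSet_of_measurableSet hi hj).measure_inter_eq_mul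
  -- eventual largeness of a * r n
  have hev : ∀ᶠ n in atTop, ((m : ℝ) + 1) < a * (r n : ℝ) := by
    filter_upwards [hr.eventually_gt_atTop (((m : ℝ) + 1) / a)] with n hn
    have := (div_lt_iff₀ ha).mp hn
    linarith
  refine ⟨1, ?_⟩
  rw [Filter.eventually_map]
  filter_upwards [hev] with n hn
  -- the finite index set of distant pairs
  set T : Finset (ℤ × ℤ) :=
    (Finset.Icc (1 : ℤ) (r n : ℤ) ×ˢ Finset.Icc (1 : ℤ) (r n : ℤ)).filter
      (fun p => p.1 + (m : ℤ) + 1 ≤ p.2) with hT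
  -- inclusion of the tail event into the union over distant pairs
  have hsub : {ω | ((L n ω : ℝ)) > a * (r n : ℝ)} ⊆ ⋃ p ∈ T, E n p.1 ∩ E n p.2 := by
    intro ω hω
    simp only [Set.mem_setOf_eq] at hω
    have harn : (0 : ℝ) < a * (r n : ℝ) := by
      have : (0 : ℝ) < (r n : ℝ) := by exact_mod_cast hrpos n
      positivity
    have hωA : ω ∈ A n := by
      by_contra hc
      rw [hL n ω, if_neg hc] at hω
      norm_num at hω
      linarith
    set S : Set ℤ := {i : ℤ | 1 ≤ i ∧ i ≤ (r n : ℤ) ∧ ‖X i ω‖ > u n} with hS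
    have hSne : S.Nonempty := by
      rw [hA] at hωA
      obtain ⟨i, h1, h2, h3⟩ := hωA
      exact ⟨i, h1, h2, h3⟩
    have hbddA : BddAbove S := ⟨(r n : ℤ), fun x hx => hx.2.1⟩
    have hbddB : BddBelow S := ⟨1, fun x hx => hx.1⟩
    have hjS : sSup S ∈ S := Int.csSup_mem hSne hbddA
    have hiS : sInf S ∈ S := Int.csInf_mem hSne hbddB
    have hLval : L n ω = sSup S - sInf S + 1 := by rw [hL n ω, if_pos hωA]
    rw [hLval] at hω
    have hgap : sInf S + (m : ℤ) + 1 ≤ sSup S := by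
      have h1 : ((sSup S - sInf S + 1 : ℤ) : ℝ) > (m : ℝ) + 1 := lt_trans hn hω
      have h2 : ((m : ℤ) : ℝ) < ((sSup S - sInf S : ℤ) : ℝ) := by push_cast at h1 ⊢; linarith
      have h3 : (m : ℤ) < sSup S - sInf S := by exact_mod_cast h2
      omega
    have hmemT : (sInf S, sSup S) ∈ T := by
      rw [hT]
      simp only [Finset.mem_filter, Finset.mem_product, Finset.mem_Icc]
      exact ⟨⟨⟨hiS.1, hiS.2.1⟩, ⟨hjS.1, hjS.2.1⟩⟩, hgap⟩
    exact Set.mem_biUnion hmemT ⟨hiS.2.2, hjS.2.2⟩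
  -- union bound and computation of each term
  have hP : P {ω | ((L n ω : ℝ)) > a * (r n : ℝ)} ≤ ∑ p ∈ T, P (E n p.1 ∩ E n p.2) :=
    (measure_mono hsub).trans (measure_biUnion_finset_le T _)
  have hterm : ∀ p ∈ T, (P (E n p.1 ∩ E n p.2)).toReal = w n * w n := by
    intro p hp
    rw [hT] at hp
    simp only [Finset.mem_filter] at hp
    rw [hindep n p.1 p.2 hp.2, ENNReal.toReal_mul, hPE n p.1, hPE n p.2, hw n]
  have hsumne : (∑ p ∈ T, P (E n p.1 ∩ E n p.2)) ≠ ⊤ :=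
    ENNReal.sum_ne_top.mpr fun p _ => measure_ne_top P _
  have h1 : (P {ω | ((L n ω : ℝ)) > a * (r n : ℝ)}).toReal ≤
      ∑ p ∈ T, (P (E n p.1 ∩ E n p.2)).toReal := by
    rw [← ENNReal.toReal_sum fun p _ => measure_ne_top P _]
    exact ENNReal.toReal_mono hsumne hP
  have hcard : T.card ≤ r n ^ 2 := by
    calc T.card ≤ ((Finset.Icc (1 : ℤ) (r n : ℤ)) ×ˢ (Finset.Icc (1 : ℤ) (r n : ℤ))).card :=
          Finset.card_filter_le _ _
      _ = r n ^ 2 := by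
          rw [Finset.card_product, Int.card_Icc]
          simp [sq]
  have hnum : (P {ω | ((L n ω : ℝ)) > a * (r n : ℝ)}).toReal ≤ (r n : ℝ) ^ 2 * w n ^ 2 := by
    calc (P {ω | ((L n ω : ℝ)) > a * (r n : ℝ)}).toReal
        ≤ ∑ p ∈ T, (P (E n p.1 ∩ E n p.2)).toReal := h1
      _ = (T.card : ℝ) * (w n * w n) := by
          rw [Finset.sum_congr rfl hterm, Finset.sum_const, nsmul_eq_mul]
      _ ≤ (r n : ℝ) ^ 2 * w n ^ 2 := by
          have hc : (T.card : ℝ) ≤ (r n : ℝ) ^ 2 := by exact_mod_cast hcard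
          have hww : w n * w n = w n ^ 2 := (sq (w n)).symm
          rw [hww]
          exact mul_le_mul_of_nonneg_right hc (sq_nonneg _)
  exact div_le_one_of_le₀ hnum (by positivity)
end

section
/- (Boundary cluster identity for the extremal index functional.) Let d ≥ 1, let x : ℤ → ℝ^d, let r be a positive integer and call an index t an exceedance if ‖x_t‖ > 1. For j = 1,2,3,4 let I_j = {(j−1)r+1, …, jr}. Suppose there is no exceedance in I_1 ∪ I_4 and at least one exceedance in each of I_2 and I_3; let T_min^2, T_max^2 be the smallest and largest exceedance indices in I_2 and T_min^3, T_max^3 those in I_3. Then Σ_{i ∈ I_1 ∪ I_2 ∪ I_3} 1{there exists t ∈ {i, …, i+r−1} with ‖x_t‖ > 1} = r + (T_max^3 − T_min^2) − max(T_min^3 − T_max^2 − r, 0). -/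
/-!
Only exceedances in `I₂ ∪ I₃` can lie in a window starting in `I₁ ∪ I₂ ∪ I₃`. The exceedances
of one block span fewer than `r` indices, so the windows meeting them are exactly those starting
in `[T_min - r + 1, T_max]`. The count is therefore the size of the union of two intervals,
`[T²_min - r + 1, T²_max]` and `[T³_min - r + 1, T³_max]`: the length of their hull minus the
gap between them, if any.
-/

open Set

def hitWindows (S : Set ℤ) (r : ℤ) : Set ℤ := {i | ∃ t ∈ S, i ≤ t ∧ t ≤ i + r - 1}

section hitWindows

variable {S T : Set ℤ} {r : ℤ}

lemma hitWindows_union : hitWindows (S ∪ T) r = hitWindows S r ∪ hitWindows T r := by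
  ext i
  simp only [hitWindows, mem_union, mem_ofPred_eq, or_and_right, exists_or]

lemma mem_hitWindows_inter_Icc_iff {lo hi i : ℤ} (hlo : lo ≤ i) (hhi : i ≤ hi) :
    i ∈ hitWindows (S ∩ Icc lo (hi + r - 1)) r ↔ i ∈ hitWindows S r := by
  constructor
  · rintro ⟨t, ⟨htS, -⟩, hit, hti⟩
    exact ⟨t, htS, hit, hti⟩
  · rintro ⟨t, htS, hit, hti⟩
    exact ⟨t, ⟨htS, by omega, by omega⟩, hit, hti⟩

lemma hitWindows_eq_Icc {a b : ℤ} (ha : a ∈ S) (hb : b ∈ S) (hS : S ⊆ Icc a b)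
    (hab : b ≤ a + r) : hitWindows S r = Icc (a - r + 1) b := by
  ext i
  constructor
  · rintro ⟨t, htS, hit, hti⟩
    have hat := (hS htS).1
    have htb := (hS htS).2
    exact ⟨by omega, by omega⟩
  · rintro ⟨hai, hib⟩
    rcases le_or_gt i a with hia | hai'
    · exact ⟨a, ha, hia, by omega⟩
    · exact ⟨b, hb, hib, by omega⟩

end hitWindows

lemma Int.csInf_mem_csSup_mem_subset_Icc {S : Set ℤ} {lo hi : ℤ} (hne : S.Nonempty)
    (hS : S ⊆ Icc lo hi) :
    sInf S ∈ S ∧ sSup S ∈ S ∧ S ⊆ Icc (sInf S) (sSup S) ∧ lo ≤ sInf S ∧ sSup S ≤ hi := by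
  have hbelow : BddBelow S := bddBelow_Icc.mono hS
  have habove : BddAbove S := bddAbove_Icc.mono hS
  have hinf := Int.csInf_mem hne hbelow
  have hsup := Int.csSup_mem hne habove
  exact ⟨hinf, hsup, subset_Icc_csInf_csSup hbelow habove, (hS hinf).1, (hS hsup).2⟩

lemma Int.card_Icc_union_Icc {α β γ δ : ℤ} (hαβ : α ≤ β + 1) (hγδ : γ ≤ δ + 1) (hαγ : α ≤ γ)
    (hβδ : β ≤ δ) :
    ((Finset.Icc α β ∪ Finset.Icc γ δ).card : ℤ) = δ + 1 - α - max (γ - β - 1) 0 := by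
  rcases le_or_gt γ (β + 1) with hoverlap | hgap
  · have hunion : Finset.Icc α β ∪ Finset.Icc γ δ = Finset.Icc α δ := by
      ext i
      simp only [Finset.mem_union, Finset.mem_Icc]
      omega
    rw [hunion, Int.card_Icc, Int.toNat_of_nonneg (by omega)]
    omega
  · have hdisj : Disjoint (Finset.Icc α β) (Finset.Icc γ δ) := by
      rw [Finset.disjoint_left]
      intro i hi hi'
      simp only [Finset.mem_Icc] at hi hi'
      omega
    rw [Finset.card_union_of_disjoint hdisj, Nat.cast_add, Int.card_Icc, Int.card_Icc,
      Int.toNat_of_nonneg (by omega), Int.toNat_of_nonneg (by omega)]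
    omega

lemma Finset.sum_indicator_one_eq_card {ι : Type*} [DecidableEq ι] {s u : Finset ι}
    {A : Set ι} (hA : ∀ i ∈ s, i ∈ A ↔ i ∈ u) (hu : u ⊆ s) :
    ∑ i ∈ s, A.indicator (fun _ => (1 : ℤ)) i = u.card := by
  classical
  rw [Finset.sum_indicator_eq_sum_filter, Finset.sum_const, Finset.filter_congr hA,
    Finset.filter_mem_eq_inter, Finset.inter_eq_right.mpr hu, nsmul_one]

lemma exceedances_inter_Icc_eq_union {F : Type*} [Norm F] (x : ℤ → F) (r : ℤ)
    (hno : ∀ t : ℤ, ((1 ≤ t ∧ t ≤ r) ∨ (3 * r + 1 ≤ t ∧ t ≤ 4 * r)) → ‖x t‖ ≤ 1) :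
    {t | ‖x t‖ > 1} ∩ Icc 1 (3 * r + r - 1) =
      {t | r + 1 ≤ t ∧ t ≤ 2 * r ∧ ‖x t‖ > 1} ∪ {t | 2 * r + 1 ≤ t ∧ t ≤ 3 * r ∧ ‖x t‖ > 1} := by
  ext t
  simp only [mem_inter_iff, mem_Icc, mem_union, mem_ofPred_eq]
  constructor
  · rintro ⟨hxt, h1, h2⟩
    have hmid : r + 1 ≤ t ∧ t ≤ 3 * r := by
      by_contra hout
      exact (hno t (by omega)).not_gt hxt
    rcases le_or_gt t (2 * r) with h | h
    exacts [Or.inl ⟨hmid.1, h, hxt⟩, Or.inr ⟨by omega, hmid.2, hxt⟩]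
  · rintro (⟨h1, h2, hxt⟩ | ⟨h1, h2, hxt⟩) <;> exact ⟨hxt, by omega, by omega⟩

theorem stmt_18_general
    {d : ℕ} (x : ℤ → (Fin d → ℝ)) (r : ℕ)
    (hno : ∀ t : ℤ, ((1 ≤ t ∧ t ≤ (r : ℤ)) ∨ (3 * (r : ℤ) + 1 ≤ t ∧ t ≤ 4 * (r : ℤ))) →
      ‖x t‖ ≤ 1)
    (hyes2 : ∃ t : ℤ, (r : ℤ) + 1 ≤ t ∧ t ≤ 2 * (r : ℤ) ∧ ‖x t‖ > 1)
    (hyes3 : ∃ t : ℤ, 2 * (r : ℤ) + 1 ≤ t ∧ t ≤ 3 * (r : ℤ) ∧ ‖x t‖ > 1) :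
    ∑ i ∈ Finset.Icc (1 : ℤ) (3 * (r : ℤ)),
        Set.indicator {i : ℤ | ∃ t : ℤ, i ≤ t ∧ t ≤ i + (r : ℤ) - 1 ∧ ‖x t‖ > 1}
          (fun _ => (1 : ℤ)) i
      = (r : ℤ)
          + (sSup {t : ℤ | 2 * (r : ℤ) + 1 ≤ t ∧ t ≤ 3 * (r : ℤ) ∧ ‖x t‖ > 1}
              - sInf {t : ℤ | (r : ℤ) + 1 ≤ t ∧ t ≤ 2 * (r : ℤ) ∧ ‖x t‖ > 1})
          - max (sInf {t : ℤ | 2 * (r : ℤ) + 1 ≤ t ∧ t ≤ 3 * (r : ℤ) ∧ ‖x t‖ > 1}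
              - sSup {t : ℤ | (r : ℤ) + 1 ≤ t ∧ t ≤ 2 * (r : ℤ) ∧ ‖x t‖ > 1}
              - (r : ℤ)) 0 := by
  set E : Set ℤ := {t | ‖x t‖ > 1}
  set S₂ := {t : ℤ | (r : ℤ) + 1 ≤ t ∧ t ≤ 2 * (r : ℤ) ∧ ‖x t‖ > 1}
  set S₃ := {t : ℤ | 2 * (r : ℤ) + 1 ≤ t ∧ t ≤ 3 * (r : ℤ) ∧ ‖x t‖ > 1}
  obtain ⟨ha, hb, hS₂, ha₂, hb₂⟩ :=
    Int.csInf_mem_csSup_mem_subset_Icc (S := S₂) hyes2 fun t ht => ⟨ht.1, ht.2.1⟩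
  obtain ⟨hc, he, hS₃, hc₃, he₃⟩ :=
    Int.csInf_mem_csSup_mem_subset_Icc (S := S₃) hyes3 fun t ht => ⟨ht.1, ht.2.1⟩
  have hab := (hS₂ ha).2
  have hce := (hS₃ hc).2
  have hE : E ∩ Icc 1 (3 * r + r - 1) = S₂ ∪ S₃ := exceedances_inter_Icc_eq_union x r hno
  have hwindows : ∀ i ∈ Finset.Icc 1 (3 * (r : ℤ)),
      i ∈ {i : ℤ | ∃ t : ℤ, i ≤ t ∧ t ≤ i + (r : ℤ) - 1 ∧ ‖x t‖ > 1} ↔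
        i ∈ Finset.Icc (sInf S₂ - r + 1) (sSup S₂) ∪ Finset.Icc (sInf S₃ - r + 1) (sSup S₃) := by
    intro i hi
    rw [Finset.mem_Icc] at hi
    rw [Finset.mem_union, Finset.mem_Icc, Finset.mem_Icc, ← mem_Icc, ← mem_Icc,
      ← hitWindows_eq_Icc ha hb hS₂ (by omega), ← hitWindows_eq_Icc hc he hS₃ (by omega),
      ← mem_union, ← hitWindows_union, ← hE, mem_hitWindows_inter_Icc_iff hi.1 hi.2]
    simp only [hitWindows, E, mem_ofPred_eq, and_comm, and_assoc]
  rw [Finset.sum_indicator_one_eq_card hwindows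
    (Finset.union_subset (Finset.Icc_subset_Icc (by omega) (by omega))
      (Finset.Icc_subset_Icc (by omega) (by omega))),
    Int.card_Icc_union_Icc (by omega) (by omega) (by omega) (by omega)]
  omega

/-- Boundary cluster identity for the extremal index functional.
If there is no exceedance in I₁ = {1,…,r} and I₄ = {3r+1,…,4r}, and at least one
exceedance in each of I₂ = {r+1,…,2r} and I₃ = {2r+1,…,3r}, then the number of windows
{i,…,i+r−1}, i ∈ I₁ ∪ I₂ ∪ I₃, containing an exceedance equals
r + (Tmax³ − Tmin²) − max(Tmin³ − Tmax² − r, 0). -/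
theorem stmt_18
    {d : ℕ} (hd : 1 ≤ d) (x : ℤ → (Fin d → ℝ)) (r : ℕ) (hr : 0 < r)
    (hno : ∀ t : ℤ, ((1 ≤ t ∧ t ≤ (r : ℤ)) ∨ (3 * (r : ℤ) + 1 ≤ t ∧ t ≤ 4 * (r : ℤ))) →
      ‖x t‖ ≤ 1)
    (hyes2 : ∃ t : ℤ, (r : ℤ) + 1 ≤ t ∧ t ≤ 2 * (r : ℤ) ∧ ‖x t‖ > 1)
    (hyes3 : ∃ t : ℤ, 2 * (r : ℤ) + 1 ≤ t ∧ t ≤ 3 * (r : ℤ) ∧ ‖x t‖ > 1) :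
    ∑ i ∈ Finset.Icc (1 : ℤ) (3 * (r : ℤ)),
        Set.indicator {i : ℤ | ∃ t : ℤ, i ≤ t ∧ t ≤ i + (r : ℤ) - 1 ∧ ‖x t‖ > 1}
          (fun _ => (1 : ℤ)) i
      = (r : ℤ)
          + (sSup {t : ℤ | 2 * (r : ℤ) + 1 ≤ t ∧ t ≤ 3 * (r : ℤ) ∧ ‖x t‖ > 1}
              - sInf {t : ℤ | (r : ℤ) + 1 ≤ t ∧ t ≤ 2 * (r : ℤ) ∧ ‖x t‖ > 1})
          - max (sInf {t : ℤ | 2 * (r : ℤ) + 1 ≤ t ∧ t ≤ 3 * (r : ℤ) ∧ ‖x t‖ > 1}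
              - sSup {t : ℤ | (r : ℤ) + 1 ≤ t ∧ t ≤ 2 * (r : ℤ) ∧ ‖x t‖ > 1}
              - (r : ℤ)) 0 :=
  stmt_18_general x r hno hyes2 hyes3
end
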